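/- In the chain C_{n+1} = ({0,...,n}, x·y = max{x−y,0}), for every x ∈ {1,...,n−1} the pair (n, x) fails the positive implicative equation (a·b)·b = a·b, while all pairs (x, n) and (n, 0) satisfy it. Consequently, the positive implicative degree of C_n equals (n² + 3n − 2)/(2n²) for all n ≥ 3. -/
import Mathlib

def tsub {n : ℕ} (a b : Fin n) : Fin n :=
  ⟨a.val - b.val, Nat.lt_of_le_of_lt (Nat.sub_le _ _) a.isLt⟩

lemma count_aux (n : ℕ) (hn : 1 ≤ n) :
    (Finset.univ.filter (fun p : Fin n × Fin n =>
        tsub (tsub p.1 p.2) p.2 = tsub p.1 p.2)).card * 2 + 2 = n ^ 2 + 3 * n := by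
  obtain ⟨m, rfl⟩ : ∃ m, n = m + 1 := ⟨n - 1, by omega⟩
  have hcong : (Finset.univ.filter (fun p : Fin (m+1) × Fin (m+1) =>
        tsub (tsub p.1 p.2) p.2 = tsub p.1 p.2))
      = Finset.univ.filter (fun p : Fin (m+1) × Fin (m+1) =>
        p.1.val ≤ p.2.val ∨ p.2.val = 0) := by
    apply Finset.filter_congr
    intro p _
    simp only [tsub, Fin.ext_iff, eq_iff_iff]
    omega
  rw [hcong, Finset.card_filter, Fintype.sum_prod_type_right]
  have hinner : ∀ b : Fin (m+1),
      (∑ a : Fin (m+1), if a.val ≤ b.val ∨ b.val = 0 then 1 else 0) =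
        if b.val = 0 then m + 1 else b.val + 1 := by
    intro b
    by_cases hb : b.val = 0
    · simp [hb]
    · simp only [hb, if_false, or_false]
      have h1 : (∑ a : Fin (m+1), if a.val ≤ b.val then 1 else 0)
          = (Finset.univ.filter (fun a : Fin (m+1) => a.val ≤ b.val)).card :=
        (Finset.card_filter _ _).symm
      rw [h1]
      have h2 : (Finset.univ.filter (fun a : Fin (m+1) => a.val ≤ b.val)) = Finset.Iic b := by
        ext a
        simp only [Finset.mem_filter, Finset.mem_Iic, Finset.mem_univ, true_and, Fin.le_def]
      rw [h2, Fin.card_Iic]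
  rw [Finset.sum_congr rfl (fun b _ => hinner b)]
  rw [Fin.sum_univ_eq_sum_range (fun k => if k = 0 then m + 1 else k + 1) (m+1),
    Finset.sum_range_succ']
  norm_num
  rw [show (∑ i ∈ Finset.range m, (i + 1 + 1)) = (∑ i ∈ Finset.range m, i) + 2 * m by
    simp [Finset.sum_add_distrib, Finset.card_range]; omega]
  have h := Finset.sum_range_id_mul_two (m + 1)
  rw [Finset.sum_range_succ, Nat.add_sub_cancel] at h
  nlinarith [h]

/-- In the chain C_{n+1} = ({0,...,n}, x·y = max{x−y,0}), for every
x ∈ {1,...,n−1} the pair (n,x) fails the positive implicative equation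
(a·b)·b = a·b, while all pairs (x,n) and the pair (n,0) satisfy it.
Consequently pid(C_n) = (n²+3n−2)/(2n²) for all n ≥ 3. -/
theorem stmt_18 (n : ℕ) (hn : 3 ≤ n) :
    (∀ x : Fin (n + 1), 1 ≤ x.val → x.val ≤ n - 1 →
      tsub (tsub ⟨n, by omega⟩ x) x ≠ tsub ⟨n, by omega⟩ x) ∧
    (∀ x : Fin (n + 1),
      tsub (tsub x ⟨n, by omega⟩) ⟨n, by omega⟩ = tsub x ⟨n, by omega⟩) ∧
    (tsub (tsub ⟨n, by omega⟩ (⟨0, by omega⟩ : Fin (n + 1))) ⟨0, by omega⟩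
      = tsub ⟨n, by omega⟩ ⟨0, by omega⟩) ∧
    ((Finset.univ.filter (fun p : Fin n × Fin n =>
        tsub (tsub p.1 p.2) p.2 = tsub p.1 p.2)).card : ℚ) / (n : ℚ) ^ 2
      = ((n : ℚ) ^ 2 + 3 * n - 2) / (2 * (n : ℚ) ^ 2) := by
  refine ⟨?_, ?_, ?_, ?_⟩
  · intro x h1 h2
    simp only [tsub, Fin.ext_iff, ne_eq]
    omega
  · intro x
    have := x.isLt
    simp only [tsub, Fin.ext_iff]
    omega
  · simp only [tsub, Fin.ext_iff]
    omega
  · have h := count_aux n (by omega)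
    have hc : ((Finset.univ.filter (fun p : Fin n × Fin n =>
        tsub (tsub p.1 p.2) p.2 = tsub p.1 p.2)).card * 2 + 2 : ℚ)
        = (n : ℚ) ^ 2 + 3 * n := by exact_mod_cast congrArg (Nat.cast : ℕ → ℚ) h
    have hn0 : (n : ℚ) ^ 2 ≠ 0 := by positivity
    rw [div_eq_div_iff hn0 (by positivity)]
    linear_combination (n : ℚ) ^ 2 * hc
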